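/- arXiv:math/9210206 — 6 statements merged into one kernel-verified Lean document; each statement's English description precedes it below -/
import Mathlib

section
/- Let X and Y be complex Banach spaces and T : X → Y a compact linear operator. Let (f_n) be a bounded sequence in L²(𝕋, X). Let H be the set of all functionals y* ∈ Y* which satisfy lim_{n→∞} ∫₀^{2π} |⟨T(f_n(e^{it})), y*⟩|² dt/2π = 0. If H separates the points of Y, then lim_{n→∞} ∫₀^{2π} ‖T(f_n(e^{it}))‖_Y² dt/2π = 0. -/
/-!
The image `K` of the closed unit ball under `T` is relatively compact. On `K`, the open sets
`{y | ‖y‖² < ε + C ∑_{g ∈ s} |g y|²}`, with `s` a finite subset of `H` and `C ∈ ℕ`, form a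
directed cover because `H` separates points, so one of them contains `K`. By homogeneity
`‖T x‖² ≤ ε ‖x‖² + C ∑_{g ∈ s} |g (T x)|²` for all `x`; integrating along `f n` and letting
`n → ∞` gives `limsup ∫ ‖T (f n)‖² ≤ ε M` for every `ε > 0`.
-/

open MeasureTheory Filter Topology

theorem tendsto_zero_of_forall_le_add {a : ℕ → ℝ} (ha : ∀ n, 0 ≤ a n)
    (h : ∀ ε > 0, ∃ b : ℕ → ℝ, Tendsto b atTop (𝓝 0) ∧ ∀ n, a n ≤ ε + b n) :
    Tendsto a atTop (𝓝 0) := by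
  refine tendsto_order.2 ⟨fun c hc => .of_forall fun n => hc.trans_le (ha n), fun δ hδ => ?_⟩
  obtain ⟨b, hb, hab⟩ := h (δ / 2) (half_pos hδ)
  filter_upwards [hb.eventually_lt_const (half_pos hδ)] with n hn
  linarith [hab n]

section

variable {𝕜 : Type*} [RCLike 𝕜] {X Y : Type*} [NormedAddCommGroup X] [NormedSpace 𝕜 X]
  [NormedAddCommGroup Y] [NormedSpace 𝕜 Y]

theorem IsCompact.exists_sq_norm_lt_add_sum_sq_norm {K : Set Y} (hK : IsCompact K)
    {S : Set (Y →L[𝕜] 𝕜)} (hS : ∀ y : Y, y ≠ 0 → ∃ g ∈ S, g y ≠ 0) {ε : ℝ} (hε : 0 < ε) :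
    ∃ s : Finset (Y →L[𝕜] 𝕜), ↑s ⊆ S ∧ ∃ C : ℝ,
      ∀ y ∈ K, ‖y‖ ^ 2 < ε + C * ∑ g ∈ s, ‖g y‖ ^ 2 := by
  classical
  let U : Finset S × ℕ → Set Y := fun i =>
    {y | ‖y‖ ^ 2 < ε + i.2 * ∑ g ∈ i.1, ‖(g : Y →L[𝕜] 𝕜) y‖ ^ 2}
  have hU_open : ∀ i, IsOpen (U i) := fun i => isOpen_lt (by fun_prop) (by fun_prop)
  have hU_mono : Monotone U := by
    rintro ⟨s, C⟩ ⟨s', C'⟩ ⟨hs, hC⟩ y hy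
    simp only [U, Set.mem_ofPred_eq] at hy ⊢
    refine hy.trans_le ?_
    gcongr
  have hU_cover : K ⊆ ⋃ i, U i := by
    intro y _
    rcases eq_or_ne y 0 with rfl | hy
    · exact Set.mem_iUnion.2 ⟨(∅, 0), by simp [U, hε]⟩
    obtain ⟨g, hgS, hgy⟩ := hS y hy
    obtain ⟨C, hC⟩ := exists_nat_gt (‖y‖ ^ 2 / ‖g y‖ ^ 2)
    have : ‖y‖ ^ 2 < C * ‖g y‖ ^ 2 := (div_lt_iff₀ (by positivity)).1 hC
    refine Set.mem_iUnion.2 ⟨({⟨g, hgS⟩}, C), ?_⟩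
    simp only [U, Set.mem_ofPred_eq, Finset.sum_singleton]
    linarith
  obtain ⟨⟨s, C⟩, hsC⟩ := hK.elim_directed_cover U hU_open hU_cover hU_mono.directed_le
  exact ⟨s.map (Function.Embedding.subtype _), by simp, C, fun y hy => by simpa [U] using hsC hy⟩

theorem IsCompactOperator.exists_sq_norm_le_add_sum_sq_norm {T : X →L[𝕜] Y}
    (hT : IsCompactOperator T) {S : Set (Y →L[𝕜] 𝕜)}
    (hS : ∀ y : Y, y ≠ 0 → ∃ g ∈ S, g y ≠ 0) {ε : ℝ} (hε : 0 < ε) :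
    ∃ s : Finset (Y →L[𝕜] 𝕜), ↑s ⊆ S ∧ ∃ C : ℝ,
      ∀ x, ‖T x‖ ^ 2 ≤ ε * ‖x‖ ^ 2 + C * ∑ g ∈ s, ‖g (T x)‖ ^ 2 := by
  obtain ⟨K, hK, hTK⟩ := hT.image_closedBall_subset_compact 1
  obtain ⟨s, hsS, C, hC⟩ := hK.exists_sq_norm_lt_add_sum_sq_norm hS hε
  refine ⟨s, hsS, C, fun x => ?_⟩
  rcases eq_or_ne x 0 with rfl | hx
  · simp
  have hr : 0 < ‖x‖ := norm_pos_iff.2 hx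
  have hunit := hC _ (hTK ⟨(‖x‖⁻¹ : 𝕜) • x, by simp [norm_smul, hr.ne'], rfl⟩)
  simp only [map_smul, norm_smul, mul_pow, ← Finset.mul_sum, norm_inv, RCLike.norm_ofReal,
    abs_norm, ContinuousLinearMap.coe_coe] at hunit
  have h2 : 0 < ‖x‖ ^ 2 := by positivity
  rw [inv_pow, inv_mul_lt_iff₀ h2, mul_add, mul_left_comm, ← mul_assoc (‖x‖ ^ 2),
    mul_inv_cancel₀ h2.ne', one_mul, mul_comm (‖x‖ ^ 2)] at hunit
  exact hunit.le

theorem IsCompactOperator.tendsto_integral_sq_norm_of_separating {α : Type*}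
    [MeasurableSpace α] {μ : Measure α} {T : X →L[𝕜] Y} (hT : IsCompactOperator T)
    {f : ℕ → α → X} (hf : ∀ n, MemLp (f n) 2 μ) {M : ℝ} (hM : ∀ n, ∫ t, ‖f n t‖ ^ 2 ∂μ ≤ M)
    (hsep : ∀ y : Y, y ≠ 0 → ∃ g : Y →L[𝕜] 𝕜,
      Tendsto (fun n => ∫ t, ‖g (T (f n t))‖ ^ 2 ∂μ) atTop (𝓝 0) ∧ g y ≠ 0) :
    Tendsto (fun n => ∫ t, ‖T (f n t)‖ ^ 2 ∂μ) atTop (𝓝 0) := by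
  refine tendsto_zero_of_forall_le_add (fun n => integral_nonneg fun t => by positivity) ?_
  intro ε hε
  have hM0 : 0 ≤ M := (integral_nonneg fun t => by positivity).trans (hM 0)
  set ε' := ε / (M + 1)
  obtain ⟨s, hsS, C, hC⟩ := hT.exists_sq_norm_le_add_sum_sq_norm
    (S := {g | Tendsto (fun n => ∫ t, ‖g (T (f n t))‖ ^ 2 ∂μ) atTop (𝓝 0)}) hsep
    (ε := ε') (by positivity)
  refine ⟨fun n => C * ∑ g ∈ s, ∫ t, ‖g (T (f n t))‖ ^ 2 ∂μ, ?_, fun n => ?_⟩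
  · simpa using (tendsto_finsetSum s fun g hg => hsS hg).const_mul C
  have hfI : Integrable (fun t => ‖f n t‖ ^ 2) μ := (hf n).integrable_norm_pow two_ne_zero
  have hTf : MemLp (fun t => T (f n t)) 2 μ := T.comp_memLp' (hf n)
  have hgTf : ∀ g ∈ s, Integrable (fun t => ‖g (T (f n t))‖ ^ 2) μ := fun g _ =>
    (g.comp_memLp' hTf).integrable_norm_pow two_ne_zero
  calc ∫ t, ‖T (f n t)‖ ^ 2 ∂μ
      ≤ ∫ t, (ε' * ‖f n t‖ ^ 2 + C * ∑ g ∈ s, ‖g (T (f n t))‖ ^ 2) ∂μ :=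
        integral_mono (hTf.integrable_norm_pow two_ne_zero)
          ((hfI.const_mul _).add ((integrable_finsetSum s hgTf).const_mul _)) fun t => hC (f n t)
    _ = ε' * ∫ t, ‖f n t‖ ^ 2 ∂μ + C * ∑ g ∈ s, ∫ t, ‖g (T (f n t))‖ ^ 2 ∂μ := by
        rw [integral_add (hfI.const_mul _) ((integrable_finsetSum s hgTf).const_mul _),
          integral_const_mul, integral_const_mul, integral_finsetSum s hgTf]
    _ ≤ ε + C * ∑ g ∈ s, ∫ t, ‖g (T (f n t))‖ ^ 2 ∂μ := by
        gcongr
        calc ε' * ∫ t, ‖f n t‖ ^ 2 ∂μ ≤ ε' * (M + 1) := by gcongr; linarith [hM n]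
          _ = ε := div_mul_cancel₀ ε (by positivity)

end

theorem stmt0_general {X Y : Type*} [NormedAddCommGroup X] [NormedSpace ℂ X]
    [NormedAddCommGroup Y] [NormedSpace ℂ Y]
    (T : X →L[ℂ] Y) (hT : IsCompactOperator T)
    (f : ℕ → ℝ → X)
    (hf : ∀ n, MemLp (f n) 2 (volume.restrict (Set.Ioc (0:ℝ) (2 * Real.pi))))
    (M : ℝ)
    (hbdd : ∀ n, ∫ t in Set.Ioc (0:ℝ) (2 * Real.pi), ‖f n t‖ ^ 2 ≤ M)
    (hsep : ∀ y : Y, y ≠ 0 →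
      ∃ g : Y →L[ℂ] ℂ,
        Tendsto (fun n => (2 * Real.pi)⁻¹ *
            ∫ t in Set.Ioc (0:ℝ) (2 * Real.pi), ‖g (T (f n t))‖ ^ 2) atTop (𝓝 0) ∧
        g y ≠ 0) :
    Tendsto (fun n => (2 * Real.pi)⁻¹ *
        ∫ t in Set.Ioc (0:ℝ) (2 * Real.pi), ‖T (f n t)‖ ^ 2) atTop (𝓝 0) := by
  have h2π : 2 * Real.pi ≠ 0 := by positivity
  have h := hT.tendsto_integral_sq_norm_of_separating hf hbdd fun y hy => by
    obtain ⟨g, hg, hgy⟩ := hsep y hy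
    refine ⟨g, ?_, hgy⟩
    simpa only [mul_inv_cancel_left₀ h2π, mul_zero] using hg.const_mul (2 * Real.pi)
  simpa using h.const_mul (2 * Real.pi)⁻¹

theorem stmt0 {X Y : Type*} [NormedAddCommGroup X] [NormedSpace ℂ X] [CompleteSpace X]
    [NormedAddCommGroup Y] [NormedSpace ℂ Y] [CompleteSpace Y]
    (T : X →L[ℂ] Y) (hT : IsCompactOperator T)
    (f : ℕ → ℝ → X)
    (hf : ∀ n, MemLp (f n) 2 (volume.restrict (Set.Ioc (0:ℝ) (2 * Real.pi))))
    (M : ℝ)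
    (hbdd : ∀ n, ∫ t in Set.Ioc (0:ℝ) (2 * Real.pi), ‖f n t‖ ^ 2 ≤ M)
    (hsep : ∀ y : Y, y ≠ 0 →
      ∃ g : Y →L[ℂ] ℂ,
        Tendsto (fun n => (2 * Real.pi)⁻¹ *
            ∫ t in Set.Ioc (0:ℝ) (2 * Real.pi), ‖g (T (f n t))‖ ^ 2) atTop (𝓝 0) ∧
        g y ≠ 0) :
    Tendsto (fun n => (2 * Real.pi)⁻¹ *
        ∫ t in Set.Ioc (0:ℝ) (2 * Real.pi), ‖T (f n t)‖ ^ 2) atTop (𝓝 0) :=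
  stmt0_general T hT f hf M hbdd hsep
end

section
/- Let X and Y be complex Banach spaces and T : X → Y a compact linear operator. Let H ⊆ Y* be a subspace which separates the points of Y, and let (y_m*)_{m≥1} be a sequence in H ∩ B_{Y*} such that the set {T*y_m* : m ≥ 1} is norm dense in T*(H ∩ B_{Y*}). Then for every ε > 0 there exists a constant C = C(ε) ≥ 0 such that ‖Tx‖_Y² ≤ ε‖x‖_X² + C · Σ_{m=1}^{∞} 2^{−m} |⟨Tx, y_m*⟩|² for every x ∈ X. -/
open Filter Topology

theorem stmt2 {X Y : Type*} [NormedAddCommGroup X] [NormedSpace ℂ X] [CompleteSpace X]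
    [NormedAddCommGroup Y] [NormedSpace ℂ Y] [CompleteSpace Y]
    (T : X →L[ℂ] Y) (hT : IsCompactOperator T)
    (H : Submodule ℂ (Y →L[ℂ] ℂ))
    (hsep : ∀ y : Y, y ≠ 0 → ∃ g ∈ H, g y ≠ 0)
    (ys : ℕ → Y →L[ℂ] ℂ)
    (hysH : ∀ m, ys m ∈ H) (hysB : ∀ m, ‖ys m‖ ≤ 1)
    (hdense : ∀ g ∈ H, ‖g‖ ≤ 1 → ∀ ε > 0, ∃ m,
      ‖g.comp (T : X →L[ℂ] Y) - (ys m).comp (T : X →L[ℂ] Y)‖ < ε) :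
    ∀ ε > (0:ℝ), ∃ C : ℝ, 0 ≤ C ∧ ∀ x : X,
      ‖T x‖ ^ 2 ≤ ε * ‖x‖ ^ 2 + C * ∑' m : ℕ, ((2:ℝ) ^ (m + 1))⁻¹ * ‖ys m (T x)‖ ^ 2 := by
  intro ε hε
  set S : X → ℝ := fun x => ∑' m : ℕ, ((2:ℝ) ^ (m + 1))⁻¹ * ‖ys m (T x)‖ ^ 2 with hS
  -- summability
  have hsum : ∀ x : X, Summable (fun m : ℕ => ((2:ℝ) ^ (m + 1))⁻¹ * ‖ys m (T x)‖ ^ 2) := by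
    intro x
    have hgsum : Summable (fun m : ℕ => ((2:ℝ)⁻¹) ^ (m+1) * ‖T x‖^2) := by
      apply Summable.mul_right
      exact (summable_geometric_of_lt_one (by norm_num) (by norm_num)).comp_injective
        (add_left_injective 1)
    refine hgsum.of_nonneg_of_le (fun m => by positivity) (fun m => ?_)
    rw [← inv_pow]
    gcongr
    calc ‖ys m (T x)‖ ≤ ‖ys m‖ * ‖T x‖ := (ys m).le_opNorm _
      _ ≤ 1 * ‖T x‖ := by gcongr; exact hysB m
      _ = ‖T x‖ := one_mul _
  have hSnn : ∀ x : X, 0 ≤ S x := fun x => tsum_nonneg (fun m => by positivity)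
  have hterm : ∀ (x : X) (m : ℕ), ((2:ℝ) ^ (m + 1))⁻¹ * ‖ys m (T x)‖ ^ 2 ≤ S x := by
    intro x m
    exact Summable.le_tsum (hsum x) m (fun n _ => by positivity)
  -- scaling
  have hSscale : ∀ (c : ℝ) (x : X), S ((c : ℂ) • x) = c^2 * S x := by
    intro c x
    rw [hS]
    simp only [map_smul, norm_smul, Complex.norm_real, mul_pow]
    rw [← tsum_mul_left]
    congr 1
    funext m
    rw [Real.norm_eq_abs, sq_abs]
    ring
  by_contra hcon
  push_neg at hcon
  have hx : ∀ n : ℕ, ∃ x : X, ε * ‖x‖ ^ 2 + (n:ℝ) * S x < ‖T x‖ ^ 2 := by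
    intro n
    obtain ⟨x, hx⟩ := hcon n (Nat.cast_nonneg n)
    exact ⟨x, hx⟩
  choose x hxlt using hx
  have hxne : ∀ n, x n ≠ 0 := by
    intro n hn
    have := hxlt n
    rw [hn] at this
    simp only [norm_zero, ne_eq, map_zero] at this
    have hn0 : (0:ℝ) ≤ (n:ℝ) := Nat.cast_nonneg n
    nlinarith [hSnn (0 : X)]
  -- normalized sequence
  set u : ℕ → X := fun n => ((‖x n‖⁻¹ : ℝ) : ℂ) • x n with hu
  have hunorm : ∀ n, ‖u n‖ = 1 := by
    intro n
    rw [hu]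
    simp [norm_smul, abs_of_nonneg (inv_nonneg.2 (norm_nonneg _)),
      inv_mul_cancel₀ (norm_ne_zero_iff.2 (hxne n))]
  have hult : ∀ n : ℕ, ε + (n:ℝ) * S (u n) < ‖T (u n)‖ ^ 2 := by
    intro n
    have hc : (0:ℝ) < ‖x n‖⁻¹ := inv_pos.2 (norm_pos_iff.2 (hxne n))
    have hTu : ‖T (u n)‖ ^ 2 = (‖x n‖⁻¹)^2 * ‖T (x n)‖ ^ 2 := by
      rw [hu]
      simp [map_smul, norm_smul, abs_of_nonneg hc.le, mul_pow]
    have hSu : S (u n) = (‖x n‖⁻¹)^2 * S (x n) := hSscale _ _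
    have hx2 : (‖x n‖⁻¹)^2 * ‖x n‖^2 = 1 := by
      rw [← mul_pow, inv_mul_cancel₀ (norm_ne_zero_iff.2 (hxne n))]; norm_num
    have h3 : (‖x n‖⁻¹)^2 * (ε * ‖x n‖^2 + (n:ℝ) * S (x n)) < (‖x n‖⁻¹)^2 * ‖T (x n)‖^2 :=
      mul_lt_mul_of_pos_left (hxlt n) (by positivity)
    have h4 : ε * ((‖x n‖⁻¹)^2 * ‖x n‖^2) = ε := by rw [hx2, mul_one]
    rw [hTu, hSu]
    nlinarith [h3, h4]
  have huball : ∀ n, u n ∈ Metric.closedBall (0:X) 1 := by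
    intro n
    simp [Metric.mem_closedBall, hunorm n]
  -- compactness
  obtain ⟨K, hK, hK2⟩ := hT.image_closedBall_subset_compact (𝕜₁ := ℂ) 1
  have hmem : ∀ n, T (u n) ∈ K := fun n => hK2 ⟨u n, huball n, rfl⟩
  obtain ⟨y, -, φ, hφ, hconv⟩ := hK.tendsto_subseq hmem
  -- bound ‖T u n‖ ≤ ‖T‖
  have hTb : ∀ n, ‖T (u n)‖ ≤ ‖T‖ := by
    intro n
    calc ‖T (u n)‖ ≤ ‖T‖ * ‖u n‖ := T.le_opNorm _
      _ = ‖T‖ := by rw [hunorm n, mul_one]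
  -- ‖y‖^2 ≥ ε
  have hynorm : ε ≤ ‖y‖ ^ 2 := by
    have : Tendsto (fun k => ‖T (u (φ k))‖ ^ 2) atTop (𝓝 (‖y‖ ^ 2)) :=
      ((continuous_norm.tendsto y).comp hconv).pow 2
    refine ge_of_tendsto this (Eventually.of_forall fun k => ?_)
    have := hult (φ k)
    have hn0 : (0:ℝ) ≤ ((φ k : ℕ):ℝ) := Nat.cast_nonneg _
    nlinarith [hSnn (u (φ k))]
  have hyne : y ≠ 0 := by
    intro h
    rw [h] at hynorm
    simp at hynorm
    nlinarith
  -- n * S (u n) ≤ ‖T‖^2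
  have hSb : ∀ n : ℕ, (n:ℝ) * S (u n) ≤ ‖T‖ ^ 2 := by
    intro n
    have := hult n
    have h2 := hTb n
    nlinarith [norm_nonneg (T (u n)), norm_nonneg T]
  -- each ys m vanishes at y
  have hysy : ∀ m, ys m y = 0 := by
    intro m
    have hten : Tendsto (fun k => ‖ys m (T (u (φ k)))‖ ^ 2) atTop (𝓝 (‖ys m y‖ ^ 2)) :=
      ((continuous_norm.tendsto _).comp ((ys m).continuous.tendsto y |>.comp hconv)).pow 2
    have hzero : Tendsto (fun k => ‖ys m (T (u (φ k)))‖ ^ 2) atTop (𝓝 0) := by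
      have hb : Tendsto (fun k : ℕ => (2:ℝ)^(m+1) * ‖T‖^2 / k) atTop (𝓝 0) :=
        tendsto_const_div_atTop_nhds_zero_nat _
      apply squeeze_zero' (Eventually.of_forall fun k => by positivity)
        ?_ hb
      filter_upwards [eventually_ge_atTop 1] with k hk
      have hφk : (1:ℝ) ≤ (φ k : ℝ) := by exact_mod_cast le_trans hk (hφ.le_apply)
      have hkφ : (k:ℝ) ≤ (φ k : ℝ) := by exact_mod_cast hφ.le_apply
      have h1 := hterm (u (φ k)) m
      have h2 := hSb (φ k)
      have hkpos : (0:ℝ) < k := by exact_mod_cast hk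
      calc ‖ys m (T (u (φ k)))‖ ^ 2
            = (2:ℝ)^(m+1) * (((2:ℝ) ^ (m + 1))⁻¹ * ‖ys m (T (u (φ k)))‖ ^ 2) := by
              rw [← mul_assoc, mul_inv_cancel₀ (by positivity), one_mul]
          _ ≤ (2:ℝ)^(m+1) * S (u (φ k)) := mul_le_mul_of_nonneg_left h1 (by positivity)
          _ ≤ (2:ℝ)^(m+1) * (‖T‖^2 / (k:ℝ)) := by
              have hS' : S (u (φ k)) ≤ ‖T‖^2 / (k:ℝ) := by
                rw [le_div_iff₀ hkpos]
                calc S (u (φ k)) * (k:ℝ) = (k:ℝ) * S (u (φ k)) := by ring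
                  _ ≤ ((φ k : ℕ):ℝ) * S (u (φ k)) := by gcongr
                  _ ≤ ‖T‖^2 := hSb (φ k)
              exact mul_le_mul_of_nonneg_left hS' (by positivity)
          _ = (2:ℝ)^(m+1) * ‖T‖^2 / (k:ℝ) := by ring
    have := tendsto_nhds_unique hten hzero
    have : ‖ys m y‖ = 0 := by nlinarith [norm_nonneg (ys m y)]
    exact norm_eq_zero.1 this
  -- every g in H ∩ ball vanishes at y
  have hHy : ∀ g ∈ H, ‖g‖ ≤ 1 → g y = 0 := by
    intro g hg hgn
    have key : ∀ δ : ℝ, 0 < δ → ‖g y‖ ≤ δ := by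
      intro δ hδ
      obtain ⟨m, hm⟩ := hdense g hg hgn δ hδ
      have hten : Tendsto (fun k => ‖g (T (u (φ k))) - ys m (T (u (φ k)))‖) atTop
          (𝓝 ‖g y - ys m y‖) := by
        apply (continuous_norm.tendsto _).comp
        exact ((g.continuous.tendsto y).comp hconv).sub
          (((ys m).continuous.tendsto y).comp hconv)
      have : ‖g y - ys m y‖ ≤ δ := by
        refine le_of_tendsto hten (Eventually.of_forall fun k => ?_)
        have : ‖(g.comp (T : X →L[ℂ] Y) - (ys m).comp (T : X →L[ℂ] Y)) (u (φ k))‖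
            ≤ ‖g.comp (T : X →L[ℂ] Y) - (ys m).comp (T : X →L[ℂ] Y)‖ * ‖u (φ k)‖ :=
          ContinuousLinearMap.le_opNorm _ _
        rw [hunorm, mul_one] at this
        simpa using this.trans hm.le
      rwa [hysy m, sub_zero] at this
    have hle : ‖g y‖ ≤ 0 := le_of_forall_gt_imp_ge_of_dense fun δ hδ => key δ hδ
    exact norm_le_zero_iff.1 hle
  obtain ⟨g, hgH, hgy⟩ := hsep y hyne
  have hgne : g ≠ (0 : Y →L[ℂ] ℂ) := fun h => hgy (by simp [h])
  set g' : Y →L[ℂ] ℂ := ((‖g‖⁻¹ : ℝ) : ℂ) • g with hg'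
  have hg'H : g' ∈ H := H.smul_mem _ hgH
  have hg'n : ‖g'‖ ≤ 1 := by
    have : ‖g'‖ = ‖((‖g‖⁻¹ : ℝ) : ℂ)‖ * ‖g‖ := norm_smul ((‖g‖⁻¹ : ℝ) : ℂ) g
    rw [this, Complex.norm_real, Real.norm_eq_abs,
      abs_of_nonneg (inv_nonneg.2 (norm_nonneg _)),
      inv_mul_cancel₀ (norm_ne_zero_iff.2 hgne)]
  have h0 := hHy g' hg'H hg'n
  rw [hg'] at h0
  simp only [ContinuousLinearMap.smul_apply, smul_eq_mul, mul_eq_zero] at h0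
  rcases h0 with h0 | h0
  · exact (Complex.ofReal_ne_zero.2 (inv_ne_zero (norm_ne_zero_iff.2 hgne))) h0
  · exact hgy h0
end

section
/- Let X and Y be complex Banach spaces and T : X → Y a compact linear operator. Then for every δ > 0 there exists an integer L = L(δ) such that for every continuous function f : 𝕋 → X with ‖f(e^{it})‖_X ≤ 1 for all t, the set {k ∈ ℤ : ‖T(f̂(k))‖_Y > δ} has at most L elements. -/
/-! For `‖f‖ ≤ 1` and finite `A ⊆ ℤ`, `∑_{k ∈ A} f̂(k)` is the pairing of `f` with
`D_A(t) = ∑_{k ∈ A} e^{-ikt}`, and `∫₀^{2π} |D_A| ≤ 2π √|A|` by Cauchy-Schwarz and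
orthogonality (`∫₀^{2π} |D_A|² = 2π |A|`); hence `‖∑_{k ∈ A} f̂(k)‖ ≤ √|A|`.
Cover the compact set `T(ball)` by finitely many `δ/4`-balls. If too many `k` had
`‖T f̂(k)‖ > δ`, pigeonhole would put a set `B` of more than `(2‖T‖/δ)²` of them into one ball,
where the vectors `T f̂(k)` add up with little cancellation:
`|B| δ/2 ≤ ‖T ∑_{k ∈ B} f̂(k)‖ ≤ ‖T‖ √|B|`, a contradiction. -/

open MeasureTheory Filter Topology

/-- The `k`-th Fourier coefficient of a `2π`-periodic function `f : ℝ → X`,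
`f̂(k) = ∫₀^{2π} f(e^{it}) e^{-ikt} dt/2π`. -/
noncomputable def fourierCoefFn {X : Type*} [NormedAddCommGroup X] [NormedSpace ℂ X]
    (f : ℝ → X) (k : ℤ) : X :=
  (((2 * Real.pi)⁻¹ : ℝ) : ℂ) •
    ∫ t in (0:ℝ)..(2 * Real.pi), Complex.exp (-(Complex.I * k * t)) • f t

section FourierCoefficients

open Complex ComplexConjugate

theorem integral_exp_I_int_mul (n : ℤ) :
    ∫ t in (0:ℝ)..(2 * Real.pi), exp (I * n * t)
      = if n = 0 then ((2 * Real.pi : ℝ) : ℂ) else 0 := by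
  split_ifs with hn
  · simp [hn]
  have hc : I * n ≠ 0 := mul_ne_zero I_ne_zero (Int.cast_ne_zero.mpr hn)
  have hperiod : I * n * ((2 * Real.pi : ℝ) : ℂ) = n * (2 * Real.pi * I) := by push_cast; ring
  rw [integral_exp_mul_complex hc, hperiod, exp_int_mul_two_pi_mul_I]
  simp

noncomputable def expSum (A : Finset ℤ) (t : ℝ) : ℂ :=
  ∑ k ∈ A, exp (-(I * k * t))

theorem continuous_expSum (A : Finset ℤ) : Continuous (expSum A) := by
  unfold expSum; fun_prop

theorem expSum_mul_conj (A : Finset ℤ) (t : ℝ) :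
    expSum A t * conj (expSum A t) = ∑ j ∈ A, ∑ k ∈ A, exp (I * ((k - j : ℤ) : ℂ) * t) := by
  simp only [expSum, map_sum, Finset.sum_mul_sum, ← exp_conj, ← exp_add]
  congr! 3
  simp [conj_ofReal]; ring

theorem integral_norm_expSum_sq (A : Finset ℤ) :
    ∫ t in (0:ℝ)..(2 * Real.pi), ‖expSum A t‖ ^ 2 = 2 * Real.pi * A.card := by
  have key : ∫ t in (0:ℝ)..(2 * Real.pi), expSum A t * conj (expSum A t)
      = ((2 * Real.pi * A.card : ℝ) : ℂ) := by
    simp_rw [expSum_mul_conj]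
    rw [intervalIntegral.integral_finsetSum fun _ _ =>
      (by fun_prop : Continuous _).intervalIntegrable _ _]
    refine (Finset.sum_congr rfl fun j hj => (?_ : _ = ((2 * Real.pi : ℝ) : ℂ))).trans
      (by simp; ring)
    rw [intervalIntegral.integral_finsetSum fun _ _ =>
      (by fun_prop : Continuous _).intervalIntegrable _ _]
    simp only [integral_exp_I_int_mul, sub_eq_zero, Finset.sum_ite_eq', if_pos hj]
  simp_rw [mul_conj, normSq_eq_norm_sq, intervalIntegral.integral_ofReal] at key
  exact_mod_cast key

theorem integral_norm_expSum_le (A : Finset ℤ) :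
    ∫ t in (0:ℝ)..(2 * Real.pi), ‖expSum A t‖ ≤ 2 * Real.pi * √A.card := by
  rcases A.eq_empty_or_nonempty with rfl | hA
  · simp [expSum]
  set c := √A.card
  have hc : 0 < c := by positivity
  -- Cauchy-Schwarz, in the form of AM-GM `x ≤ x² / (2c) + c / 2` with `c² = |A|`.
  have amgm (x : ℝ) : x ≤ x ^ 2 / (2 * c) + c / 2 := by
    rw [div_add_div _ _ (by positivity) two_ne_zero, le_div_iff₀ (by positivity)]
    nlinarith [sq_nonneg (x - c)]
  have hD := continuous_expSum A
  have hsq : Continuous fun t => ‖expSum A t‖ ^ 2 / (2 * c) := by fun_prop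
  calc ∫ t in (0:ℝ)..(2 * Real.pi), ‖expSum A t‖
      ≤ ∫ t in (0:ℝ)..(2 * Real.pi), (‖expSum A t‖ ^ 2 / (2 * c) + c / 2) :=
        intervalIntegral.integral_mono_on (by positivity) (hD.norm.intervalIntegrable _ _)
          ((hsq.add continuous_const).intervalIntegrable _ _) fun t _ => amgm _
    _ = 2 * Real.pi * c := by
        rw [intervalIntegral.integral_add (hsq.intervalIntegrable _ _) intervalIntegrable_const,
          intervalIntegral.integral_div, integral_norm_expSum_sq, intervalIntegral.integral_const,
          smul_eq_mul, ← Real.sq_sqrt (Nat.cast_nonneg A.card)]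
        field_simp
        ring

variable {X : Type*} [NormedAddCommGroup X] [NormedSpace ℂ X] {f : ℝ → X}

theorem sum_fourierCoefFn (hf : IntervalIntegrable f volume 0 (2 * Real.pi)) (A : Finset ℤ) :
    ∑ k ∈ A, fourierCoefFn f k
      = (((2 * Real.pi)⁻¹ : ℝ) : ℂ) • ∫ t in (0:ℝ)..(2 * Real.pi), expSum A t • f t := by
  have hint (k : ℤ) : IntervalIntegrable (fun t => exp (-(I * k * t)) • f t) volume 0
      (2 * Real.pi) := hf.continuousOn_smul (by fun_prop)
  simp only [fourierCoefFn, ← Finset.smul_sum, expSum, Finset.sum_smul,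
    intervalIntegral.integral_finsetSum fun k _ => hint k]

theorem norm_sum_fourierCoefFn_le_sqrt_card (hf : IntervalIntegrable f volume 0 (2 * Real.pi))
    (hf1 : ∀ t, ‖f t‖ ≤ 1) (A : Finset ℤ) : ‖∑ k ∈ A, fourierCoefFn f k‖ ≤ √A.card := by
  have hpi := Real.pi_pos
  have hint : ‖∫ t in (0:ℝ)..(2 * Real.pi), expSum A t • f t‖ ≤ 2 * Real.pi * √A.card := by
    refine (intervalIntegral.norm_integral_le_of_norm_le (by positivity)
      (ae_of_all _ fun t _ => ?_) ((continuous_expSum A).norm.intervalIntegrable _ _)).trans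
      (integral_norm_expSum_le A)
    simpa [norm_smul] using mul_le_of_le_one_right (norm_nonneg _) (hf1 t)
  rw [sum_fourierCoefFn hf, norm_smul, norm_real, Real.norm_of_nonneg (by positivity)]
  calc (2 * Real.pi)⁻¹ * _ ≤ (2 * Real.pi)⁻¹ * (2 * Real.pi * √A.card) := by gcongr
    _ = √A.card := by field_simp

end FourierCoefficients

theorem le_sq_div_of_mul_le_mul_sqrt {x a M : ℝ} (hx : 0 ≤ x) (ha : 0 < a)
    (h : x * a ≤ M * √x) : x ≤ (M / a) ^ 2 := by
  rcases hx.eq_or_lt with rfl | hx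
  · positivity
  have hsx := Real.sqrt_pos.mpr hx
  have hxs : √x * a ≤ M := le_of_mul_le_mul_left
    (by rw [← mul_assoc, Real.mul_self_sqrt hx.le, mul_comm (√x)]; exact h) hsx
  rw [div_pow, le_div_iff₀ (by positivity), ← Real.sq_sqrt hx.le, ← mul_pow]
  exact pow_le_pow_left₀ (by positivity) hxs 2

theorem card_mul_le_norm_sum_of_norm_sub_le {ι Y : Type*} [NormedAddCommGroup Y]
    [NormedSpace ℝ Y] {w : ι → Y} {B : Finset ι} {y : Y} {δ ε : ℝ}
    (hw : ∀ k ∈ B, δ ≤ ‖w k‖) (hy : ∀ k ∈ B, ‖w k - y‖ ≤ ε) :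
    B.card * (δ - 2 * ε) ≤ ‖∑ k ∈ B, w k‖ := by
  have herr : ‖∑ k ∈ B, (y - w k)‖ ≤ B.card * ε := by
    simpa using norm_sum_le_of_le B fun k hk => (norm_sub_rev y (w k)).trans_le (hy k hk)
  have hmain : B.card * (δ - 2 * ε) ≤ B.card * (‖y‖ - ε) := by
    rcases B.eq_empty_or_nonempty with rfl | ⟨k, hk⟩
    · simp
    have := norm_le_norm_add_norm_sub' (w k) y
    exact mul_le_mul_of_nonneg_left (by linarith [hw k hk, hy k hk]) B.card.cast_nonneg
  have hsum : ∑ k ∈ B, y = ∑ k ∈ B, w k + ∑ k ∈ B, (y - w k) := by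
    rw [← Finset.sum_add_distrib]; simp
  have hny : ‖∑ k ∈ B, y‖ = B.card * ‖y‖ := by simp [RCLike.norm_nsmul ℝ]
  have := norm_add_le (∑ k ∈ B, w k) (∑ k ∈ B, (y - w k))
  rw [← hsum, hny] at this
  linarith

theorem TotallyBounded.exists_card_le_of_norm_sum_le_mul_sqrt {ι Y : Type*}
    [NormedAddCommGroup Y] [NormedSpace ℝ Y] {K : Set Y} (hK : TotallyBounded K) {δ : ℝ}
    (hδ : 0 < δ) (M : ℝ) :
    ∃ L : ℕ, ∀ (w : ι → Y) (F : Finset ι), (∀ k ∈ F, w k ∈ K ∧ δ ≤ ‖w k‖) →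
      (∀ B ⊆ F, ‖∑ k ∈ B, w k‖ ≤ M * √B.card) → F.card ≤ L := by
  classical
  obtain ⟨C, hC, hKC⟩ := Metric.totallyBounded_iff.mp hK (δ / 4) (by positivity)
  choose! c hcC hc using fun y (hy : y ∈ K) => by simpa using hKC hy
  refine ⟨hC.toFinset.card * ⌈(M / (δ / 2)) ^ 2⌉₊, fun w F hF hsum => ?_⟩
  by_contra! hcard
  -- pigeonhole: more than `⌈(2M/δ)²⌉` of the `w k` lie within `δ/4` of a single net point `y`
  obtain ⟨y, -, hB⟩ := Finset.exists_lt_card_fiber_of_mul_lt_card_of_maps_to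
    (f := c ∘ w) (fun k hk => hC.mem_toFinset.mpr (hcC _ (hF k hk).1)) hcard
  set B := F.filter fun k => (c ∘ w) k = y
  have hlow : (B.card : ℝ) * (δ - 2 * (δ / 4)) ≤ M * √B.card :=
    (card_mul_le_norm_sum_of_norm_sub_le (y := y)
      (fun k hk => (hF k (Finset.mem_filter.mp hk).1).2) fun k hk => by
        obtain ⟨hkF, rfl⟩ := Finset.mem_filter.mp hk
        exact (dist_eq_norm (w k) _ ▸ hc _ (hF k hkF).1).le).trans
    (hsum B (Finset.filter_subset _ _))
  have hupp := le_sq_div_of_mul_le_mul_sqrt B.card.cast_nonneg (half_pos hδ)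
    (by convert hlow using 2; ring)
  exact absurd (Nat.cast_le.mp (hupp.trans (Nat.le_ceil _))) hB.not_ge

theorem Set.exists_finset_card_le_of_forall_finset_card_le {α : Type*} {S : Set α} {L : ℕ}
    (h : ∀ F : Finset α, ↑F ⊆ S → F.card ≤ L) : ∃ s : Finset α, s.card ≤ L ∧ S ⊆ s := by
  have hS : S.Finite := by
    by_contra hinf
    obtain ⟨F, hFS, hF⟩ := Set.Infinite.exists_subset_card_eq hinf (L + 1)
    have := h F hFS
    omega
  exact ⟨hS.toFinset, h _ (by simp), by simp⟩

theorem stmt3_general {X Y : Type*} [NormedAddCommGroup X] [NormedSpace ℂ X]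
    [NormedAddCommGroup Y] [NormedSpace ℂ Y]
    (T : X →L[ℂ] Y) (hT : IsCompactOperator T) :
    ∀ δ > (0:ℝ), ∃ L : ℕ,
      ∀ f : ℝ → X, Continuous f → Function.Periodic f (2 * Real.pi) →
        (∀ t : ℝ, ‖f t‖ ≤ 1) →
        ∃ s : Finset ℤ, s.card ≤ L ∧
          ∀ k : ℤ, δ < ‖T (fourierCoefFn f k)‖ → k ∈ s := by
  intro δ hδ
  have hK : IsCompact (closure (T '' Metric.closedBall 0 1)) :=
    IsCompactOperator.isCompact_closure_image_closedBall (f := (T : X →ₗ[ℂ] Y)) hT 1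
  obtain ⟨L, hL⟩ := hK.totallyBounded.exists_card_le_of_norm_sum_le_mul_sqrt (ι := ℤ) hδ ‖T‖
  refine ⟨L, fun f hf _ hf1 => ?_⟩
  have hsum := norm_sum_fourierCoefFn_le_sqrt_card (hf.intervalIntegrable 0 (2 * Real.pi)) hf1
  have hmem (k : ℤ) : T (fourierCoefFn f k) ∈ closure (T '' Metric.closedBall 0 1) :=
    subset_closure ⟨_, mem_closedBall_zero_iff.mpr (by simpa using hsum {k}), rfl⟩
  have hTsum (B : Finset ℤ) : ‖∑ k ∈ B, T (fourierCoefFn f k)‖ ≤ ‖T‖ * √B.card := by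
    rw [← map_sum]
    exact (T.le_opNorm _).trans (by gcongr; exact hsum B)
  obtain ⟨s, hsL, hs⟩ := Set.exists_finset_card_le_of_forall_finset_card_le
    (S := {k | δ < ‖T (fourierCoefFn f k)‖}) fun F hF =>
      hL _ F (fun k hk => ⟨hmem k, (hF hk).le⟩) fun B _ => hTsum B
  exact ⟨s, hsL, fun k hk => hs hk⟩

theorem stmt3 {X Y : Type*} [NormedAddCommGroup X] [NormedSpace ℂ X] [CompleteSpace X]
    [NormedAddCommGroup Y] [NormedSpace ℂ Y] [CompleteSpace Y]
    (T : X →L[ℂ] Y) (hT : IsCompactOperator T) :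
    ∀ δ > (0:ℝ), ∃ L : ℕ,
      ∀ f : ℝ → X, Continuous f → Function.Periodic f (2 * Real.pi) →
        (∀ t : ℝ, ‖f t‖ ≤ 1) →
        ∃ s : Finset ℤ, s.card ≤ L ∧
          ∀ k : ℤ, δ < ‖T (fourierCoefFn f k)‖ → k ∈ s :=
  stmt3_general T hT
end

section
/- Let X₀, X₁, Y₀, Y₁, E, F be Banach spaces, let i₀ : X₀ → E, i₁ : X₁ → E, j₀ : Y₀ → F, j₁ : Y₁ → F be bounded linear maps with j₀ injective, let T₀ : X₀ → Y₀ be a compact linear operator and T₁ : X₁ → Y₁ a bounded linear operator, and suppose that j₀(T₀x₀) = j₁(T₁x₁) whenever x₀ ∈ X₀ and x₁ ∈ X₁ satisfy i₀x₀ = i₁x₁. Then there exists a function η : [0,∞) → [0,∞) with lim_{δ→0} η(δ) = η(0) = 0 such that ‖T₀x₀‖_{Y₀} ≤ η(‖x₁‖_{X₁}) whenever x₀ ∈ X₀ and x₁ ∈ X₁ satisfy i₀x₀ = i₁x₁ and ‖x₀‖_{X₀} ≤ 1. Equivalently, for every ε > 0 there exists δ > 0 such that i₀x₀ = i₁x₁,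 ‖x₀‖_{X₀} ≤ 1 and ‖x₁‖_{X₁} ≤ δ imply ‖T₀x₀‖_{Y₀} ≤ ε. -/
/-!
Along pairs `(x₀, x₁)` with `i₀ x₀ = i₁ x₁`, `‖x₀‖ ≤ 1` and `x₁ → 0`, the vectors `T₀ x₀` stay in
the compact closure of `T₀` applied to the unit ball, while `j₀ (T₀ x₀) = j₁ (T₁ x₁) → 0`.
Every cluster point `y` of `T₀ x₀` therefore has `j₀ y = 0`, so `y = 0` by injectivity, and
compactness upgrades this to `T₀ x₀ → 0`. The function `η` is the resulting modulus
`η t = sup {‖T₀ x₀‖ : ‖x₁‖ ≤ t}`.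
-/

open Filter Topology Set Function

theorem IsCompact.tendsto_of_tendsto_comp {α X W : Type*} [TopologicalSpace X]
    [TopologicalSpace W] [T2Space W] {K : Set X} (hK : IsCompact K) {j : X → W}
    (hj : Continuous j) (hinj : Injective j) {f : α → X} {l : Filter α}
    (hfK : ∀ᶠ a in l, f a ∈ K) {y : X} (h : Tendsto (j ∘ f) l (𝓝 (j y))) :
    Tendsto f l (𝓝 y) :=
  hK.tendsto_nhds_of_unique_mapClusterPt hfK fun _ _ hx =>
    hinj <| eq_of_nhds_neBot <| (hx.continuousAt_comp hj.continuousAt).clusterPt.mono h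

section CompactOperator

variable {𝕜 X₀ X₁ Y₀ Y₁ F : Type*} [NontriviallyNormedField 𝕜]
  [NormedAddCommGroup X₀] [NormedSpace 𝕜 X₀] [NormedAddCommGroup X₁] [NormedSpace 𝕜 X₁]
  [NormedAddCommGroup Y₀] [NormedSpace 𝕜 Y₀] [NormedAddCommGroup Y₁] [NormedSpace 𝕜 Y₁]
  [NormedAddCommGroup F] [NormedSpace 𝕜 F]

theorem IsCompactOperator.tendsto_zero_of_comp_eq {T₀ : X₀ →L[𝕜] Y₀}
    (hT₀ : IsCompactOperator T₀) (T₁ : X₁ →L[𝕜] Y₁) {j₀ : Y₀ →L[𝕜] F} (hj₀ : Injective j₀)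
    (j₁ : Y₁ →L[𝕜] F) {P : Set (X₀ × X₁)}
    (hP : ∀ p ∈ P, ‖p.1‖ ≤ 1 ∧ j₀ (T₀ p.1) = j₁ (T₁ p.2)) :
    Tendsto (fun p => T₀ p.1) (comap (fun p => ‖p.2‖) (𝓝 0) ⊓ 𝓟 P) (𝓝 0) := by
  set l := comap (fun p : X₀ × X₁ => ‖p.2‖) (𝓝 0) ⊓ 𝓟 P
  have hball : ∀ᶠ p in l, T₀ p.1 ∈ closure (T₀ '' Metric.closedBall 0 1) :=
    eventually_inf_principal.2 <| Eventually.of_forall fun p hp =>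
      subset_closure ⟨p.1, mem_closedBall_zero_iff.2 (hP p hp).1, rfl⟩
  have hsnd : Tendsto (fun p : X₀ × X₁ => p.2) l (𝓝 0) :=
    (tendsto_zero_iff_norm_tendsto_zero.2 tendsto_comap).mono_left inf_le_left
  have hj₁T₁ : Tendsto (fun p : X₀ × X₁ => j₁ (T₁ p.2)) l (𝓝 (j₀ 0)) :=
    ((j₁.continuous.comp T₁.continuous).tendsto' 0 _ (by simp)).comp hsnd
  have hcomp : (fun p : X₀ × X₁ => j₁ (T₁ p.2)) =ᶠ[l] j₀ ∘ fun p => T₀ p.1 :=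
    eventually_inf_principal.2 <| Eventually.of_forall fun p hp => (hP p hp).2.symm
  exact (hT₀.isCompact_closure_image_closedBall 1).tendsto_of_tendsto_comp j₀.continuous hj₀
    hball (hj₁T₁.congr' hcomp)

end CompactOperator

section SublevelSup

variable {α : Type*} (s : Set α) (f g : α → ℝ)

noncomputable def sublevelSup (t : ℝ) : ℝ :=
  sSup (f '' {a ∈ s | g a ≤ t})

variable {s f g}

theorem sublevelSup_nonneg (hf : ∀ a ∈ s, 0 ≤ f a) (t : ℝ) : 0 ≤ sublevelSup s f g t :=
  Real.sSup_nonneg <| by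
    rintro _ ⟨a, ha, rfl⟩
    exact hf a ha.1

theorem le_sublevelSup (hbdd : BddAbove (f '' s)) {a : α} (ha : a ∈ s) :
    f a ≤ sublevelSup s f g (g a) :=
  le_csSup (hbdd.mono (image_mono (sep_subset _ _))) ⟨a, ⟨ha, le_rfl⟩, rfl⟩

theorem exists_forall_lt_sublevelSup_le (hg : ∀ a ∈ s, 0 ≤ g a)
    (h : Tendsto f (comap g (𝓝 0) ⊓ 𝓟 s) (𝓝 0)) {ε : ℝ} (hε : 0 < ε) :
    ∃ δ > 0, ∀ t < δ, sublevelSup s f g t ≤ ε := by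
  have hfε : ∀ᶠ a in comap g (𝓝 0) ⊓ 𝓟 s, f a ≤ ε := h (Iic_mem_nhds hε)
  rw [eventually_inf_principal, eventually_comap, Metric.eventually_nhds_iff] at hfε
  obtain ⟨δ, hδ, hfδ⟩ := hfε
  refine ⟨δ, hδ, fun t ht => Real.sSup_le ?_ hε.le⟩
  rintro _ ⟨a, ⟨ha, hat⟩, rfl⟩
  refine hfδ ?_ a rfl ha
  rw [Real.dist_0_eq_abs, abs_of_nonneg (hg a ha)]
  exact hat.trans_lt ht

theorem tendsto_sublevelSup (hf : ∀ a ∈ s, 0 ≤ f a) (hg : ∀ a ∈ s, 0 ≤ g a)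
    (h : Tendsto f (comap g (𝓝 0) ⊓ 𝓟 s) (𝓝 0)) :
    Tendsto (sublevelSup s f g) (𝓝 0) (𝓝 0) := by
  refine tendsto_order.2 ⟨fun b hb => Eventually.of_forall fun t =>
    hb.trans_le (sublevelSup_nonneg hf t), fun b hb => ?_⟩
  obtain ⟨δ, hδ, hsup⟩ := exists_forall_lt_sublevelSup_le hg h (half_pos hb)
  filter_upwards [Iio_mem_nhds hδ] with t ht
  exact (hsup t ht).trans_lt (half_lt_self hb)

theorem sublevelSup_zero (hf : ∀ a ∈ s, 0 ≤ f a) (hg : ∀ a ∈ s, 0 ≤ g a)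
    (h : Tendsto f (comap g (𝓝 0) ⊓ 𝓟 s) (𝓝 0)) : sublevelSup s f g 0 = 0 :=
  tendsto_nhds_unique (tendsto_pure_nhds _ 0)
    ((tendsto_sublevelSup hf hg h).mono_left (pure_le_nhds 0))

end SublevelSup

theorem stmt4_general {X₀ X₁ Y₀ Y₁ E F : Type*}
    [NormedAddCommGroup X₀] [NormedSpace ℂ X₀]
    [NormedAddCommGroup X₁] [NormedSpace ℂ X₁]
    [NormedAddCommGroup Y₀] [NormedSpace ℂ Y₀]
    [NormedAddCommGroup Y₁] [NormedSpace ℂ Y₁]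
    [NormedAddCommGroup E] [NormedSpace ℂ E]
    [NormedAddCommGroup F] [NormedSpace ℂ F]
    (i₀ : X₀ →L[ℂ] E) (i₁ : X₁ →L[ℂ] E) (j₀ : Y₀ →L[ℂ] F) (j₁ : Y₁ →L[ℂ] F)
    (hj₀ : Function.Injective j₀)
    (T₀ : X₀ →L[ℂ] Y₀) (hT₀ : IsCompactOperator T₀) (T₁ : X₁ →L[ℂ] Y₁)
    (hcompat : ∀ (x₀ : X₀) (x₁ : X₁), i₀ x₀ = i₁ x₁ → j₀ (T₀ x₀) = j₁ (T₁ x₁)) :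
    ∃ η : ℝ → ℝ, η 0 = 0 ∧ (∀ s : ℝ, 0 ≤ η s) ∧
      Tendsto η (nhdsWithin 0 (Set.Ici 0)) (𝓝 0) ∧
      ∀ (x₀ : X₀) (x₁ : X₁), i₀ x₀ = i₁ x₁ → ‖x₀‖ ≤ 1 → ‖T₀ x₀‖ ≤ η ‖x₁‖ := by
  set P : Set (X₀ × X₁) := {p | i₀ p.1 = i₁ p.2 ∧ ‖p.1‖ ≤ 1}
  have hlim : Tendsto (fun p : X₀ × X₁ => ‖T₀ p.1‖) (comap (fun p => ‖p.2‖) (𝓝 0) ⊓ 𝓟 P)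
      (𝓝 0) :=
    tendsto_zero_iff_norm_tendsto_zero.1 <|
      hT₀.tendsto_zero_of_comp_eq T₁ hj₀ j₁ fun p hp => ⟨hp.2, hcompat _ _ hp.1⟩
  have hbdd : BddAbove ((fun p : X₀ × X₁ => ‖T₀ p.1‖) '' P) := by
    refine ⟨‖T₀‖, ?_⟩
    rintro _ ⟨p, hp, rfl⟩
    exact (T₀.le_opNorm_of_le hp.2).trans_eq (mul_one _)
  have hf : ∀ p ∈ P, 0 ≤ ‖T₀ p.1‖ := fun _ _ => norm_nonneg _
  have hg : ∀ p ∈ P, 0 ≤ ‖p.2‖ := fun _ _ => norm_nonneg _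
  exact ⟨sublevelSup P _ _, sublevelSup_zero hf hg hlim, sublevelSup_nonneg hf,
    (tendsto_sublevelSup hf hg hlim).mono_left nhdsWithin_le_nhds,
    fun x₀ x₁ hc hx₀ => le_sublevelSup hbdd (a := (x₀, x₁)) ⟨hc, hx₀⟩⟩

theorem stmt4 {X₀ X₁ Y₀ Y₁ E F : Type*}
    [NormedAddCommGroup X₀] [NormedSpace ℂ X₀] [CompleteSpace X₀]
    [NormedAddCommGroup X₁] [NormedSpace ℂ X₁] [CompleteSpace X₁]
    [NormedAddCommGroup Y₀] [NormedSpace ℂ Y₀] [CompleteSpace Y₀]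
    [NormedAddCommGroup Y₁] [NormedSpace ℂ Y₁] [CompleteSpace Y₁]
    [NormedAddCommGroup E] [NormedSpace ℂ E] [CompleteSpace E]
    [NormedAddCommGroup F] [NormedSpace ℂ F] [CompleteSpace F]
    (i₀ : X₀ →L[ℂ] E) (i₁ : X₁ →L[ℂ] E) (j₀ : Y₀ →L[ℂ] F) (j₁ : Y₁ →L[ℂ] F)
    (hj₀ : Function.Injective j₀)
    (T₀ : X₀ →L[ℂ] Y₀) (hT₀ : IsCompactOperator T₀) (T₁ : X₁ →L[ℂ] Y₁)
    (hcompat : ∀ (x₀ : X₀) (x₁ : X₁), i₀ x₀ = i₁ x₁ → j₀ (T₀ x₀) = j₁ (T₁ x₁)) :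
    ∃ η : ℝ → ℝ, η 0 = 0 ∧ (∀ s : ℝ, 0 ≤ η s) ∧
      Tendsto η (nhdsWithin 0 (Set.Ici 0)) (𝓝 0) ∧
      ∀ (x₀ : X₀) (x₁ : X₁), i₀ x₀ = i₁ x₁ → ‖x₀‖ ≤ 1 → ‖T₀ x₀‖ ≤ η ‖x₁‖ :=
  stmt4_general i₀ i₁ j₀ j₁ hj₀ T₀ hT₀ T₁ hcompat
end

section
/- Let X and Y be complex Banach spaces and T : X → Y a compact linear operator with ‖T‖ ≤ 1. For each n ∈ ℕ let (x_k^{(n)})_{k∈ℤ} be a family in X such that for every sequence (λ_k)_{k∈ℤ} of complex numbers with |λ_k| ≤ 1 for all k, the series Σ_{k∈ℤ} λ_k x_k^{(n)} converges in X and has norm at most 1. If lim_{n→∞} sup_{k∈ℤ} ‖T x_k^{(n)}‖_Y = 0, then lim_{n→∞} ∫₀^{2π} ‖Σ_{k∈ℤ} e^{ikt} T x_k^{(n)}‖_Y² dt/2π = 0. -/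
/-!
Write `f_n(t) = ∑ₖ e^{ikt} T x_k^{(n)}`. Every value `f_n(t)` lies in the relatively compact set
`T(B_X)`, so for each `η > 0` finitely many functionals `φ₁, …, φ_m` of norm at most one satisfy
`‖y‖ ≤ max_j |φ_j y| + η` there, whence `‖f_n(t)‖² ≤ 2 ∑_j |φ_j f_n(t)|² + 2η²`. Each `φ_j ∘ f_n`
is the trigonometric series with coefficients `c_k = φ_j(T x_k^{(n)})`; testing the unconditional
bound against `λ_k = conj c_k / |c_k|` gives `∑ |c_k| ≤ 1`, so by Parseval its mean square is
`∑ |c_k|² ≤ sup_k |c_k| ≤ sup_k ‖T x_k^{(n)}‖`. Hence the mean square of `f_n` is at most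
`2m · sup_k ‖T x_k^{(n)}‖ + 2η²`, which is below `3η²` for large `n`.
-/

open MeasureTheory Filter Topology Real Complex AddCircle ComplexConjugate

section TrigonometricSeries

variable {c : ℤ → ℂ}

lemma summable_smul_fourier (hc : Summable (‖c ·‖)) :
    Summable fun k => c k • fourier (T := 2 * π) k := by
  have := Fact.mk two_pi_pos
  refine .of_norm (hc.congr fun k => ?_)
  rw [norm_smul, fourier_norm, mul_one]

lemma tsum_exp_smul_eq_fourier (hc : Summable (‖c ·‖)) (t : ℝ) :
    ∑' k : ℤ, exp (I * k * t) • c k =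
      (∑' k, c k • fourier (T := 2 * π) k) (t : AddCircle (2 * π)) := by
  rw [← ContinuousMap.evalCLM_apply ℂ,
    (ContinuousMap.evalCLM ℂ _).map_tsum (summable_smul_fourier hc)]
  refine tsum_congr fun k => ?_
  rw [ContinuousMap.evalCLM_apply, ContinuousMap.smul_apply, fourier_coe_apply, smul_eq_mul,
    smul_eq_mul, mul_comm]
  congr 2
  field_simp
  push_cast
  ring

lemma continuous_tsum_exp_smul (hc : Summable (‖c ·‖)) :
    Continuous fun t : ℝ => ∑' k : ℤ, exp (I * k * t) • c k := by
  simp_rw [tsum_exp_smul_eq_fourier hc]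
  fun_prop

theorem average_norm_sq_tsum_exp_smul (hc : Summable (‖c ·‖)) :
    (2 * π)⁻¹ * ∫ t in (0 : ℝ)..2 * π, ‖∑' k : ℤ, exp (I * k * t) • c k‖ ^ 2 =
      ∑' k, ‖c k‖ ^ 2 := by
  have := Fact.mk two_pi_pos
  set G := ∑' k, c k • fourier (T := 2 * π) k
  set toL2 := ContinuousMap.toLp (E := ℂ) 2 (haarAddCircle (T := 2 * π)) ℂ
  have hc2 : Memℓp c 2 := (memℓp_gen (by simpa using hc) : Memℓp c 1).of_exponent_ge (by norm_num)
  have hG : toL2 G = fourierBasis.repr.symm ⟨c, hc2⟩ := by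
    refine ((summable_smul_fourier hc).hasSum.map toL2 toL2.continuous).unique ?_
    convert (fourierBasis (T := 2 * π)).hasSum_repr_symm ⟨c, hc2⟩ using 1
    ext1 k
    simp [toL2, coe_fourierBasis]
  have hcoeff : fourierCoeff (toL2 G) = c := funext fun k => by
    rw [← fourierBasis_repr, hG, LinearIsometryEquiv.apply_symm_apply]
  calc (2 * π)⁻¹ * ∫ t in (0 : ℝ)..2 * π, ‖∑' k : ℤ, exp (I * k * t) • c k‖ ^ 2
      = (2 * π)⁻¹ * ∫ t in (0 : ℝ)..0 + 2 * π, ‖G t‖ ^ 2 := by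
        simp_rw [zero_add, tsum_exp_smul_eq_fourier hc]
        rfl
    _ = ∫ t, ‖G t‖ ^ 2 ∂haarAddCircle := by
        rw [AddCircle.intervalIntegral_preimage _ _ fun t => ‖G t‖ ^ 2, integral_haarAddCircle,
          smul_eq_mul]
    _ = ∫ t, ‖toL2 G t‖ ^ 2 ∂haarAddCircle :=
        integral_congr_ae ((ContinuousMap.coeFn_toLp _ G).fun_comp (‖·‖ ^ 2)).symm
    _ = ∑' k, ‖c k‖ ^ 2 := by rw [← tsum_sq_fourierCoeff, hcoeff]

lemma average_norm_sq_tsum_exp_smul_le {A M : ℝ}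
    (hA : ∀ F : Finset ℤ, ∑ k ∈ F, ‖c k‖ ≤ A) (hM : ∀ k, ‖c k‖ ≤ M) :
    (2 * π)⁻¹ * ∫ t in (0 : ℝ)..2 * π, ‖∑' k : ℤ, exp (I * k * t) • c k‖ ^ 2 ≤ M * A := by
  have hc : Summable (‖c ·‖) := summable_of_sum_le (fun _ => norm_nonneg _) hA
  have hM0 : 0 ≤ M := (norm_nonneg _).trans (hM 0)
  have hsq : ∀ k, ‖c k‖ ^ 2 ≤ M * ‖c k‖ := fun k => by
    rw [sq]; exact mul_le_mul_of_nonneg_right (hM k) (norm_nonneg _)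
  rw [average_norm_sq_tsum_exp_smul hc]
  calc ∑' k, ‖c k‖ ^ 2 ≤ ∑' k, M * ‖c k‖ :=
        (hc.mul_left M).of_nonneg_of_le (fun _ => by positivity) hsq |>.tsum_le_tsum hsq
          (hc.mul_left M)
    _ = M * ∑' k, ‖c k‖ := tsum_mul_left
    _ ≤ M * A := by gcongr; exact hc.tsum_le_of_sum_le hA

end TrigonometricSeries

theorem IsCompact.exists_finset_norm_le_norm_apply_add {𝕜 E : Type*} [RCLike 𝕜]
    [NormedAddCommGroup E] [NormedSpace 𝕜 E] {K : Set E} (hK : IsCompact K) {ε : ℝ}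
    (hε : 0 < ε) :
    ∃ s : Finset (E →L[𝕜] 𝕜), (∀ φ ∈ s, ‖φ‖ ≤ 1) ∧ ∀ y ∈ K, ∃ φ ∈ s, ‖y‖ ≤ ‖φ y‖ + ε := by
  classical
  choose φ hφ hφy using fun y : E => exists_dual_vector'' 𝕜 y
  obtain ⟨t, -, hcover⟩ := hK.elim_nhds_subcover (fun y => {z | ‖z‖ < ‖φ y z‖ + ε}) fun y _ =>
    (isOpen_lt continuous_norm ((φ y).continuous.norm.add continuous_const)).mem_nhds
      (by simp [hφy, hε])
  refine ⟨t.image φ, by simpa using fun y _ => hφ y, fun y hy => ?_⟩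
  obtain ⟨z, hz, hyz⟩ := Set.mem_iUnion₂.1 (hcover hy)
  exact ⟨φ z, Finset.mem_image_of_mem _ hz, hyz.le⟩

theorem sum_norm_apply_le_of_norm_tsum_smul_le {𝕜 ι E : Type*} [RCLike 𝕜]
    [NormedAddCommGroup E] [NormedSpace 𝕜 E] {v : ι → E} {C : ℝ}
    (hv : ∀ lam : ι → 𝕜, (∀ k, ‖lam k‖ ≤ 1) → ‖∑' k, lam k • v k‖ ≤ C)
    (ψ : E →L[𝕜] 𝕜) (F : Finset ι) :
    ∑ k ∈ F, ‖ψ (v k)‖ ≤ ‖ψ‖ * C := by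
  classical
  -- `lam k * ψ (v k) = ‖ψ (v k)‖` on `F`, also when `ψ (v k) = 0`, where `lam k = 0 / 0 = 0`
  set lam : ι → 𝕜 := fun k => if k ∈ F then conj (ψ (v k)) / ‖ψ (v k)‖ else 0
  have hlam : ∀ k, ‖lam k‖ ≤ 1 := fun k => by
    by_cases hk : k ∈ F
    · simp only [lam, if_pos hk, norm_div, RCLike.norm_conj, RCLike.norm_ofReal, abs_norm]
      exact div_self_le_one _
    · simp [lam, hk]
  have htsum : ∑' k, lam k • v k = ∑ k ∈ F, lam k • v k :=
    tsum_eq_sum fun k hk => by simp [lam, hk]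
  have hψ : ψ (∑ k ∈ F, lam k • v k) = ∑ k ∈ F, (‖ψ (v k)‖ : 𝕜) := by
    simp only [map_sum, map_smul, smul_eq_mul]
    refine Finset.sum_congr rfl fun k hk => ?_
    simp only [lam, if_pos hk]
    rw [div_mul_eq_mul_div, RCLike.conj_mul, sq, mul_self_div_self]
  calc ∑ k ∈ F, ‖ψ (v k)‖ = ‖ψ (∑ k ∈ F, lam k • v k)‖ := by
        rw [hψ, ← RCLike.ofReal_sum, RCLike.norm_ofReal, abs_of_nonneg (by positivity)]
    _ ≤ ‖ψ‖ * ‖∑ k ∈ F, lam k • v k‖ := ψ.le_opNorm _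
    _ ≤ ‖ψ‖ * C := by gcongr; rw [← htsum]; exact hv lam hlam

theorem tendsto_zero_of_forall_le_mul_add {α : Type*} {l : Filter α} {a b : α → ℝ}
    (ha : ∀ i, 0 ≤ a i) (hb : Tendsto b l (𝓝 0)) (h : ∀ ε > 0, ∃ C, ∀ i, a i ≤ C * b i + ε) :
    Tendsto a l (𝓝 0) := by
  refine tendsto_order.2 ⟨fun e he => .of_forall fun i => he.trans_le (ha i), fun e he => ?_⟩
  obtain ⟨C, hC⟩ := h (e / 2) (half_pos he)
  have hCb : Tendsto (fun i => C * b i) l (𝓝 0) := by simpa using hb.const_mul C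
  filter_upwards [hCb.eventually (gt_mem_nhds (half_pos he))] with i hi
  linarith [hC i]

theorem average_norm_sq_le_two_mul_sum_add {ι E F : Type*} [NormedAddCommGroup E]
    [NormedAddCommGroup F] {f : ℝ → E} {g : ι → ℝ → F} {s : Finset ι} {a b η : ℝ} (hab : a < b)
    (hg : ∀ i ∈ s, IntervalIntegrable (fun t => ‖g i t‖ ^ 2) volume a b)
    (hfg : ∀ t, ∃ i ∈ s, ‖f t‖ ≤ ‖g i t‖ + η) :
    (b - a)⁻¹ * ∫ t in a..b, ‖f t‖ ^ 2 ≤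
      2 * (∑ i ∈ s, (b - a)⁻¹ * ∫ t in a..b, ‖g i t‖ ^ 2) + 2 * η ^ 2 := by
  have hpt : ∀ t, ‖f t‖ ^ 2 ≤ 2 * (∑ i ∈ s, ‖g i t‖ ^ 2) + 2 * η ^ 2 := fun t => by
    obtain ⟨i, hi, hle⟩ := hfg t
    have := Finset.single_le_sum (fun j _ => sq_nonneg ‖g j t‖) hi
    nlinarith [norm_nonneg (f t), sq_nonneg (‖g i t‖ - η)]
  have hsum : IntervalIntegrable (fun t => ∑ i ∈ s, ‖g i t‖ ^ 2) volume a b := by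
    simpa only [Finset.sum_fn] using IntervalIntegrable.sum s hg
  have hG : IntervalIntegrable (fun t => 2 * (∑ i ∈ s, ‖g i t‖ ^ 2) + 2 * η ^ 2) volume a b :=
    (hsum.const_mul 2).add intervalIntegrable_const
  have hint : ∫ t in a..b, ‖f t‖ ^ 2 ≤ ∫ t in a..b, (2 * (∑ i ∈ s, ‖g i t‖ ^ 2) + 2 * η ^ 2) := by
    rw [intervalIntegral.integral_of_le hab.le, intervalIntegral.integral_of_le hab.le]
    exact integral_mono_of_nonneg (.of_forall fun t => by positivity) hG.1 (.of_forall hpt)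
  rw [intervalIntegral.integral_add (hsum.const_mul 2)
    intervalIntegrable_const, intervalIntegral.integral_const_mul,
    intervalIntegral.integral_finsetSum hg, intervalIntegral.integral_const, smul_eq_mul] at hint
  have hba : b - a ≠ 0 := (sub_pos.2 hab).ne'
  calc (b - a)⁻¹ * ∫ t in a..b, ‖f t‖ ^ 2
      ≤ (b - a)⁻¹ * (2 * (∑ i ∈ s, ∫ t in a..b, ‖g i t‖ ^ 2) + (b - a) * (2 * η ^ 2)) :=
        mul_le_mul_of_nonneg_left hint (inv_nonneg.2 (sub_pos.2 hab).le)
    _ = _ := by rw [← Finset.mul_sum]; field_simp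

theorem average_norm_sq_tsum_exp_smul_map_le {X Y : Type*} [NormedAddCommGroup X] [NormedSpace ℂ X]
    [NormedAddCommGroup Y] [NormedSpace ℂ Y] (T : X →L[ℂ] Y) (hTnorm : ‖T‖ ≤ 1) {v : ℤ → X}
    (hv : ∀ lam : ℤ → ℂ, (∀ k, ‖lam k‖ ≤ 1) →
      Summable (fun k => lam k • v k) ∧ ‖∑' k, lam k • v k‖ ≤ 1)
    {s : Finset (Y →L[ℂ] ℂ)} (hs : ∀ φ ∈ s, ‖φ‖ ≤ 1) {η : ℝ}
    (hnorming : ∀ y ∈ T '' Metric.closedBall 0 1, ∃ φ ∈ s, ‖y‖ ≤ ‖φ y‖ + η) :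
    (2 * π)⁻¹ * ∫ t in (0 : ℝ)..2 * π, ‖∑' k : ℤ, exp (I * k * t) • T (v k)‖ ^ 2 ≤
      2 * s.card * (⨆ k, ‖T (v k)‖) + 2 * η ^ 2 := by
  have hexp : ∀ (t : ℝ) (k : ℤ), ‖exp (I * k * t)‖ ≤ 1 := fun t k => by
    rw [mul_assoc, ← ofReal_intCast, ← ofReal_mul, norm_exp_I_mul_ofReal]
  have hv1 : ∀ k, ‖v k‖ ≤ 1 := fun k => by
    have h := (hv (Pi.single k 1) fun j => by by_cases h : j = k <;> simp [h]).2
    rwa [tsum_eq_single k fun j hj => by simp [hj], Pi.single_eq_same, one_smul] at h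
  have hM : ∀ k, ‖T (v k)‖ ≤ ⨆ j, ‖T (v j)‖ := le_ciSup ⟨1, by
    rintro _ ⟨k, rfl⟩; exact (T.le_of_opNorm_le hTnorm (v k)).trans (by simpa using hv1 k)⟩
  have hsum : ∀ t : ℝ, Summable fun k : ℤ => exp (I * k * t) • v k := fun t =>
    (hv _ (hexp t)).1
  have hT : ∀ t : ℝ, ∑' k : ℤ, exp (I * k * t) • T (v k) = T (∑' k : ℤ, exp (I * k * t) • v k) :=
    fun t => by simp_rw [← map_smul]; exact (T.map_tsum (hsum t)).symm
  have hφT : ∀ (φ : Y →L[ℂ] ℂ) (t : ℝ), φ (∑' k : ℤ, exp (I * k * t) • T (v k)) =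
      ∑' k : ℤ, exp (I * k * t) • φ (T (v k)) := fun φ t => by
    rw [hT, ← ContinuousLinearMap.comp_apply, (φ.comp T).map_tsum (hsum t)]
    simp_rw [map_smul, ContinuousLinearMap.comp_apply]
  have hφA : ∀ φ ∈ s, ∀ F : Finset ℤ, ∑ k ∈ F, ‖φ (T (v k))‖ ≤ 1 := fun φ hφ F =>
    calc ∑ k ∈ F, ‖φ (T (v k))‖ ≤ ‖φ.comp T‖ * 1 :=
          sum_norm_apply_le_of_norm_tsum_smul_le (fun lam hlam => (hv lam hlam).2) (φ.comp T) F
      _ ≤ 1 := by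
          rw [mul_one]
          exact (φ.opNorm_comp_le T).trans (mul_le_one₀ (hs φ hφ) (norm_nonneg _) hTnorm)
  have hφM : ∀ φ ∈ s, ∀ k, ‖φ (T (v k))‖ ≤ ⨆ j, ‖T (v j)‖ := fun φ hφ k =>
    (φ.le_of_opNorm_le (hs φ hφ) _).trans (by simpa using hM k)
  have hφint : ∀ φ ∈ s, IntervalIntegrable
      (fun t : ℝ => ‖φ (∑' k : ℤ, exp (I * k * t) • T (v k))‖ ^ 2) volume 0 (2 * π) :=
      fun φ hφ => by
    simp_rw [hφT]
    exact ((continuous_tsum_exp_smul (summable_of_sum_le (fun _ => norm_nonneg _)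
      (hφA φ hφ))).norm.pow 2).intervalIntegrable _ _
  have hφavg : ∀ φ ∈ s, (2 * π)⁻¹ * ∫ t in (0 : ℝ)..2 * π,
      ‖φ (∑' k : ℤ, exp (I * k * t) • T (v k))‖ ^ 2 ≤ ⨆ j, ‖T (v j)‖ := fun φ hφ => by
    simp_rw [hφT]
    simpa using average_norm_sq_tsum_exp_smul_le (hφA φ hφ) (hφM φ hφ)
  have hsplit := average_norm_sq_le_two_mul_sum_add two_pi_pos hφint fun t =>
    hnorming _ ⟨_, mem_closedBall_zero_iff.2 (hv _ (hexp t)).2, (hT t).symm⟩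
  rw [sub_zero] at hsplit
  calc _ ≤ _ := hsplit
    _ ≤ 2 * (∑ _φ ∈ s, ⨆ j, ‖T (v j)‖) + 2 * η ^ 2 := by gcongr with φ hφ; exact hφavg φ hφ
    _ = _ := by rw [Finset.sum_const, nsmul_eq_mul]; ring

theorem stmt5_general {X Y : Type*} [NormedAddCommGroup X] [NormedSpace ℂ X]
    [NormedAddCommGroup Y] [NormedSpace ℂ Y]
    (T : X →L[ℂ] Y) (hT : IsCompactOperator T) (hTnorm : ‖T‖ ≤ 1)
    (x : ℕ → ℤ → X)
    (hx : ∀ (n : ℕ) (lam : ℤ → ℂ), (∀ k, ‖lam k‖ ≤ 1) →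
      Summable (fun k : ℤ => lam k • x n k) ∧ ‖∑' k : ℤ, lam k • x n k‖ ≤ 1)
    (hsup : Tendsto (fun n => ⨆ k : ℤ, ‖T (x n k)‖) atTop (𝓝 0)) :
    Tendsto (fun n => (2 * Real.pi)⁻¹ *
        ∫ t in (0:ℝ)..(2 * Real.pi),
          ‖∑' k : ℤ, Complex.exp (Complex.I * k * t) • T (x n k)‖ ^ 2)
      atTop (𝓝 0) := by
  have hK : IsCompact (closure (T '' Metric.closedBall 0 1)) :=
    hT.isCompact_closure_image_of_bounded Metric.isBounded_closedBall
  refine tendsto_zero_of_forall_le_mul_add (fun n => ?_) hsup fun ε hε => ?_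
  · exact mul_nonneg (by positivity)
      (intervalIntegral.integral_nonneg two_pi_pos.le fun _ _ => by positivity)
  obtain ⟨s, hs, hnorming⟩ := hK.exists_finset_norm_le_norm_apply_add (𝕜 := ℂ)
    (Real.sqrt_pos.2 (half_pos hε))
  refine ⟨2 * s.card, fun n => ?_⟩
  have h := average_norm_sq_tsum_exp_smul_map_le T hTnorm (hx n) hs
    fun y hy => hnorming y (subset_closure hy)
  rwa [Real.sq_sqrt (half_pos hε).le, mul_div_cancel₀ _ two_ne_zero] at h

theorem stmt5 {X Y : Type*} [NormedAddCommGroup X] [NormedSpace ℂ X] [CompleteSpace X]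
    [NormedAddCommGroup Y] [NormedSpace ℂ Y] [CompleteSpace Y]
    (T : X →L[ℂ] Y) (hT : IsCompactOperator T) (hTnorm : ‖T‖ ≤ 1)
    (x : ℕ → ℤ → X)
    (hx : ∀ (n : ℕ) (lam : ℤ → ℂ), (∀ k, ‖lam k‖ ≤ 1) →
      Summable (fun k : ℤ => lam k • x n k) ∧ ‖∑' k : ℤ, lam k • x n k‖ ≤ 1)
    (hsup : Tendsto (fun n => ⨆ k : ℤ, ‖T (x n k)‖) atTop (𝓝 0)) :
    Tendsto (fun n => (2 * Real.pi)⁻¹ *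
        ∫ t in (0:ℝ)..(2 * Real.pi),
          ‖∑' k : ℤ, Complex.exp (Complex.I * k * t) • T (x n k)‖ ^ 2)
      atTop (𝓝 0) :=
  stmt5_general T hT hTnorm x hx hsup
end

section
/- Let X and Y be complex Banach spaces, T : X → Y a compact linear operator, and ε > 0. Then there exists a finite-dimensional subspace F of X such that for every continuous function f : 𝕋 → X with ‖f(e^{it})‖_X ≤ 1 for all t, there exists an infinitely differentiable function h : 𝕋 → F with ‖h(e^{it})‖_X ≤ 1 and ‖T(f(e^{it})) − T(h(e^{it}))‖_Y ≤ 2ε for all t. -/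
open MeasureTheory Filter Topology

set_option maxHeartbeats 1000000

lemma my_exists_net {X Y : Type*} [NormedAddCommGroup X] [NormedSpace ℂ X]
    [NormedAddCommGroup Y] [NormedSpace ℂ Y]
    (T : X →L[ℂ] Y) (hT : IsCompactOperator T) {ε : ℝ} (hε : 0 < ε) :
    ∃ A : Finset X, (∀ a ∈ A, ‖a‖ ≤ 1) ∧
      ∀ x : X, ‖x‖ ≤ 1 → ∃ a ∈ A, ‖T x - T a‖ < ε := by
  classical
  have hcomp : IsCompact (closure (⇑T '' Metric.closedBall 0 1)) :=
    IsCompactOperator.isCompact_closure_image_closedBall (f := (T : X →ₗ[ℂ] Y)) hT 1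
  have htb : TotallyBounded (⇑T '' Metric.closedBall 0 1) :=
    hcomp.totallyBounded.subset subset_closure
  obtain ⟨t, hts, htf, hcov⟩ := totallyBounded_iff_subset.1 htb _
    (Metric.dist_mem_uniformity hε)
  choose! a ha hTa using fun y (hy : y ∈ t) => hts hy
  refine ⟨htf.toFinset.image a, ?_, ?_⟩
  · intro b hb
    simp only [Finset.mem_image, Set.Finite.mem_toFinset] at hb
    obtain ⟨y, hy, rfl⟩ := hb
    simpa [Metric.mem_closedBall, dist_zero_right] using (ha y hy)
  · intro x hx
    have hxmem : T x ∈ ⇑T '' Metric.closedBall 0 1 :=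
      ⟨x, by simpa [Metric.mem_closedBall, dist_zero_right] using hx, rfl⟩
    obtain ⟨y, hy, hxy⟩ := Set.mem_iUnion₂.1 (hcov hxmem)
    refine ⟨a y, Finset.mem_image.2 ⟨y, htf.mem_toFinset.2 hy, rfl⟩, ?_⟩
    have : dist (T x) y < ε := hxy
    rw [← hTa y hy] at this
    simpa [dist_eq_norm] using this

lemma my_periodic_unif {E : Type*} [PseudoMetricSpace E] {g : ℝ → E} (hg : Continuous g)
    (hp : Function.Periodic g (2 * Real.pi)) {ε : ℝ} (hε : 0 < ε) :
    ∃ δ : ℝ, 0 < δ ∧ δ ≤ 1 ∧ ∀ s t : ℝ, |s - t| ≤ δ → dist (g s) (g t) ≤ ε := by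
  have hπ := Real.pi_pos
  set I : Set ℝ := Set.Icc (-1 : ℝ) (2 * Real.pi + 1) with hI
  have hIc : IsCompact I := isCompact_Icc
  have huc : UniformContinuousOn g I :=
    hIc.uniformContinuousOn_of_continuous hg.continuousOn
  obtain ⟨δ₀, hδ₀, hδ⟩ := (Metric.uniformContinuousOn_iff).1 huc ε hε
  refine ⟨min (δ₀ / 2) 1, by positivity, min_le_right _ _, ?_⟩
  intro s t hst
  set n : ℤ := ⌊t / (2 * Real.pi)⌋ with hn
  have h2π : (0:ℝ) < 2 * Real.pi := by positivity
  set t' : ℝ := t - n * (2 * Real.pi) with ht'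
  set s' : ℝ := s - n * (2 * Real.pi) with hs'
  have ht'0 : 0 ≤ t' := by
    rw [ht', hn, sub_nonneg]
    calc (⌊t / (2 * Real.pi)⌋ : ℝ) * (2 * Real.pi) ≤ t / (2 * Real.pi) * (2 * Real.pi) := by
          gcongr; exact Int.floor_le _
      _ = t := by field_simp
  have ht'2 : t' < 2 * Real.pi := by
    rw [ht', hn, sub_lt_iff_lt_add]
    have := Int.lt_floor_add_one (t / (2 * Real.pi))
    calc t = t / (2 * Real.pi) * (2 * Real.pi) := by field_simp
      _ < (⌊t / (2 * Real.pi)⌋ + 1) * (2 * Real.pi) := by gcongr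
      _ = 2 * Real.pi + ⌊t / (2 * Real.pi)⌋ * (2 * Real.pi) := by ring
  have hss : |s' - t'| ≤ min (δ₀ / 2) 1 := by
    rw [hs', ht']; simpa using hst
  have habs1 : |s' - t'| ≤ 1 := le_trans hss (min_le_right _ _)
  have htI : t' ∈ I := ⟨by linarith, by linarith⟩
  have hsI : s' ∈ I := by
    rw [abs_le] at habs1
    exact ⟨by linarith [habs1.1], by linarith [habs1.2]⟩
  have hdst : dist s' t' < δ₀ := by
    rw [Real.dist_eq]
    calc |s' - t'| ≤ δ₀ / 2 := le_trans hss (min_le_left _ _)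
      _ < δ₀ := by linarith
  have := hδ s' hsI t' htI hdst
  rw [show g s' = g s from hp.sub_int_mul_eq n, show g t' = g t from hp.sub_int_mul_eq n] at this
  exact this.le

lemma my_grid (N : ℕ) (hN : 0 < N) (t : ℝ) :
    ∃ j < N, Real.cos (Real.pi / N) ≤ Real.cos (t - 2 * Real.pi * j / N) := by
  have hπ := Real.pi_pos
  have hN0 : (0:ℝ) < N := by exact_mod_cast hN
  set m : ℤ := round (t * N / (2 * Real.pi)) with hm
  set u : ℝ := t - 2 * Real.pi * m / N with hu
  have hu_abs : |u| ≤ Real.pi / N := by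
    have h1 : |t * N / (2 * Real.pi) - m| ≤ 1 / 2 := abs_sub_round _
    have h2 : u = 2 * Real.pi / N * (t * N / (2 * Real.pi) - m) := by
      rw [hu]; field_simp
    rw [h2, abs_mul, abs_of_pos (by positivity : (0:ℝ) < 2 * Real.pi / N)]
    calc 2 * Real.pi / N * |t * N / (2 * Real.pi) - m| ≤ 2 * Real.pi / N * (1 / 2) := by gcongr
      _ = Real.pi / N := by ring
  set j : ℕ := (m % N).toNat with hj
  have hjN : j < N := by
    rw [hj]
    have h1 : m % (N : ℤ) < N := Int.emod_lt_of_pos m (by exact_mod_cast hN)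
    omega
  have hjm : (j : ℝ) = (m : ℝ) - (N : ℝ) * ((m / N : ℤ) : ℝ) := by
    have : ((j : ℤ) : ℝ) = ((m % N : ℤ) : ℝ) := by
      rw [hj, Int.toNat_of_nonneg (Int.emod_nonneg m (by positivity))]
    push_cast at this ⊢
    rw [this, Int.emod_def]
    push_cast; ring
  have hcosj : Real.cos (t - 2 * Real.pi * j / N) = Real.cos u := by
    have : t - 2 * Real.pi * j / N = u + (m / N : ℤ) * (2 * Real.pi) := by
      rw [hjm, hu]; field_simp; ring
    rw [this, Real.cos_add_int_mul_two_pi]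
  refine ⟨j, hjN, ?_⟩
  rw [hcosj, ← Real.cos_abs u]
  exact Real.cos_le_cos_of_nonneg_of_le_pi (abs_nonneg _)
    (div_le_self hπ.le (by exact_mod_cast hN)) hu_abs

lemma my_near {δ θ t : ℝ} (hδ0 : 0 < δ) (hδπ : δ < Real.pi)
    (hcos : Real.cos δ ≤ Real.cos (t - θ)) :
    ∃ u : ℝ, |u| ≤ δ ∧ ∃ k : ℤ, t - k * (2 * Real.pi) = θ + u := by
  have hπ := Real.pi_pos
  set k : ℤ := round ((t - θ) / (2 * Real.pi)) with hk
  set u : ℝ := t - θ - k * (2 * Real.pi) with hu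
  have hu_abs : |u| ≤ Real.pi := by
    have h1 : |(t - θ) / (2 * Real.pi) - k| ≤ 1 / 2 := abs_sub_round _
    have h2 : u = 2 * Real.pi * ((t - θ) / (2 * Real.pi) - k) := by
      rw [hu]; field_simp
    rw [h2, abs_mul, abs_of_pos (by positivity : (0:ℝ) < 2 * Real.pi)]
    calc 2 * Real.pi * |(t - θ) / (2 * Real.pi) - k| ≤ 2 * Real.pi * (1 / 2) := by gcongr
      _ = Real.pi := by ring
  have hcosu : Real.cos δ ≤ Real.cos u := by
    have h3 : t - θ = u + k * (2 * Real.pi) := by rw [hu]; ring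
    rwa [h3, Real.cos_add_int_mul_two_pi] at hcos
  refine ⟨u, ?_, k, by rw [hu]; ring⟩
  by_contra hcon
  push_neg at hcon
  have := Real.cos_lt_cos_of_nonneg_of_le_pi hδ0.le hu_abs hcon
  rw [Real.cos_abs] at this
  linarith

theorem stmt8 {X Y : Type*} [NormedAddCommGroup X] [NormedSpace ℂ X] [CompleteSpace X]
    [NormedAddCommGroup Y] [NormedSpace ℂ Y] [CompleteSpace Y]
    (T : X →L[ℂ] Y) (hT : IsCompactOperator T) (ε : ℝ) (hε : 0 < ε) :
    ∃ F : Submodule ℂ X, FiniteDimensional ℂ F ∧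
      ∀ f : ℝ → X, Continuous f → Function.Periodic f (2 * Real.pi) →
        (∀ t : ℝ, ‖f t‖ ≤ 1) →
        ∃ h : ℝ → X, ContDiff ℝ (⊤ : ℕ∞) h ∧ Function.Periodic h (2 * Real.pi) ∧
          (∀ t : ℝ, h t ∈ F) ∧ (∀ t : ℝ, ‖h t‖ ≤ 1) ∧
          ∀ t : ℝ, ‖T (f t) - T (h t)‖ ≤ 2 * ε := by
  classical
  have hπ := Real.pi_pos
  obtain ⟨A, hA1, hA2⟩ := my_exists_net T hT hε
  refine ⟨Submodule.span ℂ (A : Set X),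
    FiniteDimensional.span_of_finite ℂ A.finite_toSet, ?_⟩
  intro f hf hper hnorm
  have hgper : Function.Periodic (fun t => T (f t)) (2 * Real.pi) := hper.comp T
  obtain ⟨δ, hδ0, hδ1, hδ⟩ := my_periodic_unif (T.continuous.comp hf) hgper (by positivity : (0:ℝ) < ε / 2)
  have hδπ : δ < Real.pi := lt_of_le_of_lt hδ1 (by linarith [Real.pi_gt_three])
  set N : ℕ := ⌈Real.pi / δ⌉₊ + 1 with hN
  have hNpos : 0 < N := Nat.succ_pos _
  have hN0 : 0 < (N : ℝ) := by positivity
  have hπδN : Real.pi / δ < (N : ℝ) := by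
    have := Nat.le_ceil (Real.pi / δ)
    rw [hN]; push_cast; linarith
  have hπN : Real.pi / N < δ := by
    rw [div_lt_iff₀ hN0]
    calc Real.pi = Real.pi / δ * δ := by field_simp
      _ < N * δ := by gcongr
      _ = δ * N := by ring
  -- gap between cos values
  set a : ℝ := Real.cos (Real.pi / N) - Real.cos δ with ha_def
  have ha : 0 < a := by
    rw [ha_def, sub_pos]
    exact Real.cos_lt_cos_of_nonneg_of_le_pi (by positivity) hδπ.le hπN
  set M : ℝ := 2 * (‖T‖ + 1) with hM_def
  have hM : 0 < M := by rw [hM_def]; positivity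
  set K : ℝ := a⁻¹ * max 0 (Real.log (2 * N * M / ε)) with hK_def
  have hK0 : 0 ≤ K := mul_nonneg (inv_nonneg.2 ha.le) (le_max_left _ _)
  -- the analytic bump functions
  obtain ⟨b, hb⟩ : ∃ b : ℕ → ℝ → ℝ, ∀ (j : ℕ) (t : ℝ),
      b j t = Real.exp (K * (Real.cos (t - 2 * Real.pi * j / N) - 1)) :=
    ⟨_, fun _ _ => rfl⟩
  obtain ⟨S, hSdef⟩ : ∃ S : ℝ → ℝ, S = fun t => ∑ j ∈ Finset.range N, b j t := ⟨_, rfl⟩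
  have hbcont : ∀ j, ContDiff ℝ (⊤ : ℕ∞) (b j) := by
    intro j
    have hbj : b j = fun t => Real.exp (K * (Real.cos (t - 2 * Real.pi * j / N) - 1)) :=
      funext fun t => hb j t
    rw [hbj]
    have h1 : ContDiff ℝ (⊤ : ℕ∞) (fun t : ℝ =>
        K * (Real.cos (t - 2 * Real.pi * j / N) - 1)) :=
      contDiff_const.mul
        ((Real.contDiff_cos.comp (contDiff_id.sub contDiff_const)).sub contDiff_const)
    exact Real.contDiff_exp.comp h1
  have hScont : ContDiff ℝ (⊤ : ℕ∞) S := by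
    rw [hSdef]; exact ContDiff.sum fun j _ => hbcont j
  have hbpos : ∀ j t, 0 < b j t := fun j t => by simp only [hb]; exact Real.exp_pos _
  have hS : ∀ t, 0 < S t := by
    intro t
    rw [hSdef]
    exact Finset.sum_pos (fun j _ => hbpos j t) (Finset.nonempty_range_iff.2 hNpos.ne')
  -- lower bound on S
  have hSlow : ∀ t, Real.exp (K * (Real.cos (Real.pi / N) - 1)) ≤ S t := by
    intro t
    obtain ⟨j, hjN, hjcos⟩ := my_grid N hNpos t
    calc Real.exp (K * (Real.cos (Real.pi / N) - 1)) ≤ b j t := by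
          rw [hb]
          apply Real.exp_le_exp.2
          have : Real.cos (Real.pi / N) - 1 ≤ Real.cos (t - 2 * Real.pi * j / N) - 1 := by
            linarith
          exact mul_le_mul_of_nonneg_left this hK0
      _ ≤ S t := by
          rw [hSdef]
          exact Finset.single_le_sum (fun i _ => (hbpos i t).le) (Finset.mem_range.2 hjN)
  have hψnonneg : ∀ j t, 0 ≤ b j t / S t := fun j t => div_nonneg (hbpos j t).le (hS t).le
  have hsum1 : ∀ t, ∑ j ∈ Finset.range N, b j t / S t = 1 := by
    intro t
    rw [← Finset.sum_div]
    have hSt : S t = ∑ j ∈ Finset.range N, b j t := by rw [hSdef]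
    rw [← hSt, div_self (hS t).ne']
  -- bound on the "far" mass ratio
  have hratio : Real.exp (K * (Real.cos δ - 1)) / Real.exp (K * (Real.cos (Real.pi / N) - 1))
      ≤ ε / (2 * N * M) := by
    rw [← Real.exp_sub]
    have h1 : K * (Real.cos δ - 1) - K * (Real.cos (Real.pi / N) - 1) = -(K * a) := by
      rw [ha_def]; ring
    rw [h1]
    have hx : (0:ℝ) < 2 * N * M / ε := by positivity
    have h2 : Real.log (2 * N * M / ε) ≤ K * a := by
      have hKa : K * a = max 0 (Real.log (2 * N * M / ε)) := by
        rw [hK_def, mul_comm, ← mul_assoc, mul_inv_cancel₀ ha.ne', one_mul]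
      rw [hKa]
      exact le_max_right _ _
    calc Real.exp (-(K * a)) ≤ Real.exp (-(Real.log (2 * N * M / ε))) := by
          apply Real.exp_le_exp.2; linarith
      _ = ε / (2 * N * M) := by
          rw [Real.exp_neg, Real.exp_log hx]
          field_simp
  -- net points
  choose c hcA hc using fun j : ℕ => hA2 (f (2 * Real.pi * j / N)) (hnorm _)
  refine ⟨fun t => ∑ j ∈ Finset.range N, (b j t / S t) • c j, ?_, ?_, ?_, ?_, ?_⟩
  · exact ContDiff.sum fun j _ =>
      ((hbcont j).div hScont fun t => (hS t).ne').smul contDiff_const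
  · intro t
    have hbper : ∀ j, b j (t + 2 * Real.pi) = b j t := by
      intro j
      simp only [hb]
      rw [show t + 2 * Real.pi - 2 * Real.pi * j / N
          = (t - 2 * Real.pi * j / N) + 2 * Real.pi by ring, Real.cos_add_two_pi]
    have hSper : S (t + 2 * Real.pi) = S t := by
      simp only [hSdef]; exact Finset.sum_congr rfl fun j _ => hbper j
    exact Finset.sum_congr rfl fun j _ => by rw [hbper j, hSper]
  · intro t
    exact Submodule.sum_mem _ fun j _ =>
      Submodule.smul_of_tower_mem _ _ (Submodule.subset_span (hcA j))
  · intro t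
    calc ‖∑ j ∈ Finset.range N, (b j t / S t) • c j‖
        ≤ ∑ j ∈ Finset.range N, ‖(b j t / S t) • c j‖ := norm_sum_le _ _
      _ ≤ ∑ j ∈ Finset.range N, b j t / S t := by
          refine Finset.sum_le_sum fun j _ => ?_
          rw [norm_smul, Real.norm_eq_abs, abs_of_nonneg (hψnonneg j t)]
          calc b j t / S t * ‖c j‖ ≤ b j t / S t * 1 := by
                gcongr
                · exact hψnonneg j t
                · exact hA1 _ (hcA j)
            _ = b j t / S t := mul_one _
      _ = 1 := hsum1 t
  · intro t
    have hTh : T (∑ j ∈ Finset.range N, (b j t / S t) • c j)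
        = ∑ j ∈ Finset.range N, (b j t / S t) • T (c j) := by
      rw [map_sum]
      exact Finset.sum_congr rfl fun j _ => T.map_smul_of_tower _ _
    have hTf : T (f t) = ∑ j ∈ Finset.range N, (b j t / S t) • T (f t) := by
      rw [← Finset.sum_smul, hsum1 t, one_smul]
    rw [hTh]
    nth_rewrite 1 [hTf]
    rw [← Finset.sum_sub_distrib]
    have hterm : ∀ j ∈ Finset.range N,
        ‖(b j t / S t) • T (f t) - (b j t / S t) • T (c j)‖
          ≤ (b j t / S t) * (3 / 2 * ε) + ε / (2 * N) := by
      intro j _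
      rw [← smul_sub, norm_smul, Real.norm_eq_abs, abs_of_nonneg (hψnonneg j t)]
      rcases le_or_gt (Real.cos δ) (Real.cos (t - 2 * Real.pi * j / N)) with hnear | hfar
      · -- near case
        obtain ⟨u, huδ, k, hku⟩ := my_near hδ0 hδπ hnear
        have hTft : T (f t) = T (f (2 * Real.pi * j / N + u)) := by
          rw [← hku, hgper.sub_int_mul_eq k]
        have hest1 : ‖T (f t) - T (f (2 * Real.pi * j / N))‖ ≤ ε / 2 := by
          rw [hTft]
          have := hδ (2 * Real.pi * j / N + u) (2 * Real.pi * j / N) (by simpa using huδ)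
          rwa [dist_eq_norm] at this
        have hbound : ‖T (f t) - T (c j)‖ ≤ 3 / 2 * ε := by
          calc ‖T (f t) - T (c j)‖
              ≤ ‖T (f t) - T (f (2 * Real.pi * j / N))‖
                + ‖T (f (2 * Real.pi * j / N)) - T (c j)‖ :=
                norm_sub_le_norm_sub_add_norm_sub _ _ _
            _ ≤ ε / 2 + ε := add_le_add hest1 (hc j).le
            _ = 3 / 2 * ε := by ring
        calc b j t / S t * ‖T (f t) - T (c j)‖ ≤ b j t / S t * (3 / 2 * ε) :=
              mul_le_mul_of_nonneg_left hbound (hψnonneg j t)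
          _ ≤ b j t / S t * (3 / 2 * ε) + ε / (2 * N) := le_add_of_nonneg_right (by positivity)
      · -- far case
        have hψsmall : b j t / S t ≤ ε / (2 * N * M) := by
          calc b j t / S t
              ≤ Real.exp (K * (Real.cos δ - 1))
                / Real.exp (K * (Real.cos (Real.pi / N) - 1)) := by
                apply div_le_div₀ (Real.exp_pos _).le _ (Real.exp_pos _) (hSlow t)
                simp only [hb]
                apply Real.exp_le_exp.2
                exact mul_le_mul_of_nonneg_left (by linarith) hK0
            _ ≤ ε / (2 * N * M) := hratio
        have hbound : ‖T (f t) - T (c j)‖ ≤ M := by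
          have h1 : ‖T (f t)‖ ≤ ‖T‖ := by
            calc ‖T (f t)‖ ≤ ‖T‖ * ‖f t‖ := T.le_opNorm _
              _ ≤ ‖T‖ * 1 := by gcongr; exact hnorm t
              _ = ‖T‖ := mul_one _
          have h2 : ‖T (c j)‖ ≤ ‖T‖ := by
            calc ‖T (c j)‖ ≤ ‖T‖ * ‖c j‖ := T.le_opNorm _
              _ ≤ ‖T‖ * 1 := by gcongr; exact hA1 _ (hcA j)
              _ = ‖T‖ := mul_one _
          calc ‖T (f t) - T (c j)‖ ≤ ‖T (f t)‖ + ‖T (c j)‖ := norm_sub_le _ _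
            _ ≤ ‖T‖ + ‖T‖ := add_le_add h1 h2
            _ ≤ M := by rw [hM_def]; linarith
        calc b j t / S t * ‖T (f t) - T (c j)‖
            ≤ ε / (2 * N * M) * M := by
              apply mul_le_mul hψsmall hbound (norm_nonneg _) (by positivity)
          _ = ε / (2 * N) := by field_simp
          _ ≤ b j t / S t * (3 / 2 * ε) + ε / (2 * N) :=
              le_add_of_nonneg_left (mul_nonneg (hψnonneg j t) (by positivity))
    calc ‖∑ j ∈ Finset.range N, ((b j t / S t) • T (f t) - (b j t / S t) • T (c j))‖
        ≤ ∑ j ∈ Finset.range N, ‖(b j t / S t) • T (f t) - (b j t / S t) • T (c j)‖ :=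
          norm_sum_le _ _
      _ ≤ ∑ j ∈ Finset.range N, ((b j t / S t) * (3 / 2 * ε) + ε / (2 * N)) :=
          Finset.sum_le_sum hterm
      _ = 3 / 2 * ε + ε / 2 := by
          rw [Finset.sum_add_distrib, ← Finset.sum_mul, hsum1 t, one_mul,
            Finset.sum_const, Finset.card_range, nsmul_eq_mul]
          congr 1
          field_simp
      _ = 2 * ε := by ring
end
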